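/- arXiv:1709.03069 — 2 statements merged into one kernel-verified Lean document; each statement's English description precedes it below -/
import Mathlib

section
/- Let G be a group and R a nontrivial associative ring with unity (1 ≠ 0). Then G is abelian if and only if Δ_R²(Conj(G)) = {0}. -/
/-!
Statement 3: Let `G` be a group and `R` a nontrivial associative ring with unity.
Then `G` is abelian if and only if `Δ_R²(Conj(G)) = {0}`, where `Conj(G)` is the
conjugation quandle with operation `a·b = b⁻¹ a b`.
-/

variable {X R : Type*}

/-- Multiplication on the free module `X →₀ R` induced by a binary operation on `X`. -/
noncomputable def qmul [Ring R] (op : X → X → X) (u v : X →₀ R) : X →₀ R :=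
  u.sum fun x a => v.sum fun y b => Finsupp.single (op x y) (a * b)

/-- The augmentation homomorphism `R[X] → R`, `Σ αᵢ xᵢ ↦ Σ αᵢ`. -/
noncomputable def augHom [Ring R] : (X →₀ R) →+ R :=
  Finsupp.liftAddHom fun _ => AddMonoidHom.id R

/-- `Δ_R²(X)`: the additive subgroup generated by all products `u·v` with
`u, v` in the augmentation ideal. -/
noncomputable def deltaSq [Ring R] (op : X → X → X) : AddSubgroup (X →₀ R) :=
  AddSubgroup.closure
    {w | ∃ u v : X →₀ R, augHom u = 0 ∧ augHom v = 0 ∧ w = qmul op u v}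

lemma qmul_single_single [Ring R] (op : X → X → X) (x y : X) (a b : R) :
    qmul op (Finsupp.single x a) (Finsupp.single y b)
      = Finsupp.single (op x y) (a * b) := by
  unfold qmul
  rw [Finsupp.sum_single_index, Finsupp.sum_single_index] <;> simp

lemma qmul_sub_left [Ring R] (op : X → X → X) (u u' v : X →₀ R) :
    qmul op (u - u') v = qmul op u v - qmul op u' v := by
  unfold qmul
  rw [Finsupp.sum_sub_index]
  intro x b1 b2
  simp [sub_mul, Finsupp.single_sub, Finsupp.sum_sub]

lemma qmul_sub_right [Ring R] (op : X → X → X) (u v v' : X →₀ R) :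
    qmul op u (v - v') = qmul op u v - qmul op u v' := by
  unfold qmul
  rw [← Finsupp.sum_sub]
  congr 1
  ext x a
  rw [Finsupp.sum_sub_index]
  intro y b1 b2
  simp [mul_sub, Finsupp.single_sub]

lemma augHom_single [Ring R] (x : X) (a : R) :
    augHom (Finsupp.single x a) = a := by
  simp [augHom]

lemma key_sum [Ring R] (x : X) (a : R) (v : X →₀ R) :
    (v.sum fun _ b => Finsupp.single x (a * b)) = Finsupp.single x (a * augHom v) := by
  rw [show (Finsupp.single x (a * augHom v))
        = ((Finsupp.singleAddHom x).comp (AddMonoidHom.mulLeft a)) (augHom (R := R) v) from rfl,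
      augHom, Finsupp.liftAddHom_apply, map_finsuppSum]
  rfl

theorem stmt_3 {G : Type*} [Group G] [Ring R] [Nontrivial R] :
    (∀ a b : G, a * b = b * a) ↔
      deltaSq (R := R) (fun a b : G => b⁻¹ * a * b) = ⊥ := by
  constructor
  · intro hab
    have hop : (fun a b : G => b⁻¹ * a * b) = fun a _ => a := by
      funext a b; rw [mul_assoc, hab a b]; group
    apply le_antisymm _ bot_le
    rw [deltaSq, AddSubgroup.closure_le]
    rintro w ⟨u, v, _, hv, rfl⟩
    simp only [SetLike.mem_coe, AddSubgroup.mem_bot]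
    rw [hop]
    unfold qmul
    simp only [key_sum, hv, mul_zero, Finsupp.single_zero, Finsupp.sum_fun_zero]
  · intro h a b
    set u : G →₀ R := Finsupp.single a 1 - Finsupp.single 1 1 with hu
    set v : G →₀ R := Finsupp.single b 1 - Finsupp.single 1 1 with hv
    have hm : qmul (fun a b : G => b⁻¹ * a * b) u v ∈
        deltaSq (R := R) (fun a b : G => b⁻¹ * a * b) :=
      AddSubgroup.subset_closure ⟨u, v, by simp [hu, augHom_single], by simp [hv, augHom_single], rfl⟩
    rw [h, AddSubgroup.mem_bot, hu, hv, qmul_sub_left, qmul_sub_right, qmul_sub_right,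
      qmul_single_single, qmul_single_single, qmul_single_single, qmul_single_single] at hm
    simp only [mul_one, inv_one, one_mul, mul_inv_cancel_left, sub_self, sub_zero,
      inv_mul_cancel, sub_eq_zero] at hm
    have hba : b⁻¹ * a * b = a :=
      Finsupp.single_left_injective (one_ne_zero) hm
    calc a * b = b * (b⁻¹ * a * b) := by group
    _ = b * a := by rw [hba]
end

section
/- Let X = {x₁, …, xₙ} be a finite latin rack (for each x ∈ X, the map y ↦ x·y is a permutation of X), and let w = x₁ + x₂ + ⋯ + xₙ ∈ R[X]. Then: (1) for any associative ring R with unity, w·v = v·w for all v ∈ R[X] (w is central); (2) if R is a field whose characteristic does not divide n, then (n⁻¹w)·(n⁻¹w) = n⁻¹w; (3) if R is a field whose characteristic does not divide n and α ∈ R satisfies 1 + nα ≠ 0, then in R°[X] the element e + αw is a central unit with two-sided inverse e − (α/(1 + nα))w. -/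
/-!
Statement 13: Let `X = {x₁, …, xₙ}` be a finite latin rack and `w = x₁ + ⋯ + xₙ ∈ R[X]`.
Then: (1) for any associative ring `R` with unity, `w·v = v·w` for all `v ∈ R[X]`;
(2) if `K` is a field whose characteristic does not divide `n`, then `(n⁻¹w)·(n⁻¹w) = n⁻¹w`;
(3) if moreover `α ∈ K` satisfies `1 + nα ≠ 0`, then in `K°[X]` the element `e + αw` is a
central unit with two-sided inverse `e − (α/(1 + nα))w`.
-/

variable {X R : Type*}

/-- Right scalar action of `R` on `X →₀ R` (multiplying each coefficient on the right). -/
noncomputable def rsmul [Ring R] (s : R) (a : X →₀ R) : X →₀ R :=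
  a.sum fun x c => Finsupp.single x (c * s)

/-- Multiplication of the extended rack ring `R°[X] = R × R[X]`:
`(r, a)(s, b) = (rs, r•b + a•s + ab)`, with unity `e = (1, 0)`. -/
noncomputable def emul [Ring R] (op : X → X → X) (u v : R × (X →₀ R)) : R × (X →₀ R) :=
  (u.1 * v.1, u.1 • v.2 + rsmul v.1 u.2 + qmul op u.2 v.2)

/-- The sum `w = x₁ + x₂ + ⋯ + xₙ` of all basis elements of `R[X]`. -/
noncomputable def wAll (X R : Type*) [Fintype X] [Ring R] : X →₀ R :=
  ∑ x : X, Finsupp.single x 1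

section lem
variable [Ring R] (op : X → X → X)

lemma qmul_zero_left (v : X →₀ R) : qmul op 0 v = 0 := Finsupp.sum_zero_index

lemma qmul_zero_right (u : X →₀ R) : qmul op u 0 = 0 := by
  simp [qmul, Finsupp.sum_zero_index]

lemma qmul_single (x y : X) (a b : R) :
    qmul op (Finsupp.single x a) (Finsupp.single y b) = Finsupp.single (op x y) (a * b) := by
  unfold qmul
  rw [Finsupp.sum_single_index, Finsupp.sum_single_index]
  · simp
  · rw [Finsupp.sum_single_index] <;> simp

lemma qmul_add_left (u u' v : X →₀ R) :
    qmul op (u + u') v = qmul op u v + qmul op u' v :=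
  Finsupp.sum_add_index' (fun x => by simp)
    (fun x a a' => by simp [add_mul, Finsupp.single_add, Finsupp.sum_add])

lemma qmul_add_right (u v v' : X →₀ R) :
    qmul op u (v + v') = qmul op u v + qmul op u v' := by
  unfold qmul
  rw [← Finsupp.sum_add]
  exact Finsupp.sum_congr fun x _ =>
    Finsupp.sum_add_index' (fun y => by simp) (fun y b b' => by simp [mul_add, Finsupp.single_add])

lemma qmul_sum_left {ι : Type*} (s : Finset ι) (f : ι → (X →₀ R)) (v : X →₀ R) :
    qmul op (∑ i ∈ s, f i) v = ∑ i ∈ s, qmul op (f i) v := by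
  induction s using Finset.cons_induction with
  | empty => simp [qmul_zero_left]
  | cons i s hi ih => simp [Finset.sum_cons, qmul_add_left, ih]

lemma qmul_sum_right {ι : Type*} (s : Finset ι) (u : X →₀ R) (f : ι → (X →₀ R)) :
    qmul op u (∑ i ∈ s, f i) = ∑ i ∈ s, qmul op u (f i) := by
  induction s using Finset.cons_induction with
  | empty => simp [qmul_zero_right]
  | cons i s hi ih => simp [Finset.sum_cons, qmul_add_right, ih]

lemma qmul_smul_left (a : R) (u v : X →₀ R) :
    qmul op (a • u) v = a • qmul op u v := by
  unfold qmul
  rw [Finsupp.sum_smul_index' (fun x => by simp), Finsupp.smul_sum]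
  refine Finsupp.sum_congr fun x _ => ?_
  rw [Finsupp.smul_sum]
  exact Finsupp.sum_congr fun y _ => by
    rw [Finsupp.smul_single, smul_eq_mul, smul_eq_mul, mul_assoc]

lemma qmul_smul_right {K : Type*} [CommRing K] (op : X → X → X) (a : K) (u v : X →₀ K) :
    qmul op u (a • v) = a • qmul op u v := by
  unfold qmul
  rw [Finsupp.smul_sum]
  refine Finsupp.sum_congr fun x c => ?_
  rw [Finsupp.sum_smul_index' (fun y => by simp), Finsupp.smul_sum]
  exact Finsupp.sum_congr fun y _ => by
    rw [Finsupp.smul_single, smul_eq_mul, smul_eq_mul, mul_left_comm]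

lemma rsmul_one (u : X →₀ R) : rsmul 1 u = u := by
  simp [rsmul, Finsupp.sum_single]

lemma rsmul_eq_smul {K : Type*} [CommRing K] (s : K) (u : X →₀ K) : rsmul s u = s • u := by
  unfold rsmul
  conv_rhs => rw [← Finsupp.sum_single u, Finsupp.smul_sum]
  exact Finsupp.sum_congr fun x _ => by rw [Finsupp.smul_single, smul_eq_mul, mul_comm]

variable [Fintype X]

lemma qmul_w_single (hbij : ∀ y, Function.Bijective fun x => op x y) (y : X) (b : R) :
    qmul op (wAll X R) (Finsupp.single y b) = ∑ z : X, Finsupp.single z b := by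
  rw [wAll, qmul_sum_left]
  refine (Fintype.sum_bijective _ (hbij y) _ _ fun x => ?_)
  rw [qmul_single, one_mul]

lemma qmul_single_w (hlatin : ∀ x : X, Function.Bijective (op x)) (y : X) (b : R) :
    qmul op (Finsupp.single y b) (wAll X R) = ∑ z : X, Finsupp.single z b := by
  rw [wAll, qmul_sum_right]
  refine (Fintype.sum_bijective _ (hlatin y) _ _ fun x => ?_)
  rw [qmul_single, mul_one]

lemma w_central (hbij : ∀ y, Function.Bijective fun x => op x y)
    (hlatin : ∀ x : X, Function.Bijective (op x)) (v : X →₀ R) :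
    qmul op (wAll X R) v = qmul op v (wAll X R) := by
  induction v using Finsupp.induction with
  | zero => rw [qmul_zero_left, qmul_zero_right]
  | single_add y b f _ _ ih =>
      rw [qmul_add_right, qmul_add_left, ih, qmul_w_single op hbij,
        qmul_single_w op hlatin]

lemma qmul_w_w (hlatin : ∀ x : X, Function.Bijective (op x)) :
    qmul op (wAll X R) (wAll X R) = (Fintype.card X) • wAll X R := by
  have h : ∀ x : X, qmul op (Finsupp.single x (1 : R)) (∑ z : X, Finsupp.single z (1 : R))
      = ∑ z : X, Finsupp.single z (1 : R) := fun x => by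
    have := qmul_single_w op hlatin x (1 : R); rwa [wAll] at this
  rw [wAll, qmul_sum_left, Finset.sum_congr rfl (fun x _ => h x),
    Finset.sum_const, Finset.card_univ]

end lem

theorem stmt_13 {K : Type*} [Fintype X] (op : X → X → X)
    (hbij : ∀ y, Function.Bijective fun x => op x y)
    (hdist : ∀ x y z, op (op x y) z = op (op x z) (op y z))
    (hlatin : ∀ x : X, Function.Bijective (op x))
    [Ring R] [Field K] (hchar : ¬ (ringChar K ∣ Fintype.card X)) :
    -- (1) `w` is central in `R[X]`
    (∀ v : X →₀ R, qmul op (wAll X R) v = qmul op v (wAll X R)) ∧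
    -- (2) `n⁻¹ w` is idempotent
    qmul op ((Fintype.card X : K)⁻¹ • wAll X K) ((Fintype.card X : K)⁻¹ • wAll X K) =
      (Fintype.card X : K)⁻¹ • wAll X K ∧
    -- (3) `e + αw` is a central unit of `K°[X]`, with inverse `e − (α/(1 + nα))w`
    ∀ α : K, 1 + (Fintype.card X : K) * α ≠ 0 →
      (∀ v : K × (X →₀ K),
        emul op ((1 : K), α • wAll X K) v = emul op v ((1 : K), α • wAll X K)) ∧
      emul op ((1 : K), α • wAll X K)
          ((1 : K), (-(α / (1 + (Fintype.card X : K) * α))) • wAll X K) = ((1 : K), 0) ∧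
      emul op ((1 : K), (-(α / (1 + (Fintype.card X : K) * α))) • wAll X K)
          ((1 : K), α • wAll X K) = ((1 : K), 0) := by
  have hn : (Fintype.card X : K) ≠ 0 := fun h => hchar ((ringChar.spec K _).mp h)
  refine ⟨w_central op hbij hlatin, ?_, ?_⟩
  · rw [qmul_smul_left, qmul_smul_right, qmul_w_w op hlatin,
      ← Nat.cast_smul_eq_nsmul K, smul_smul, smul_smul, mul_assoc, inv_mul_cancel₀ hn, mul_one]
  · intro α hα
    have hkey : ∀ β : K, β + α + α * β * (Fintype.card X : K) = 0 →
        emul op ((1 : K), α • wAll X K) ((1 : K), β • wAll X K) = ((1 : K), 0) := by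
      intro β hβ
      simp only [emul, one_mul, mul_one, one_smul]
      rw [rsmul_one, qmul_smul_left, qmul_smul_right, qmul_w_w op hlatin,
        ← Nat.cast_smul_eq_nsmul K, smul_smul, smul_smul, ← add_smul, ← add_smul, hβ, zero_smul]
    have hcent : ∀ v : K × (X →₀ K),
        emul op ((1 : K), α • wAll X K) v = emul op v ((1 : K), α • wAll X K) := by
      intro v
      have hc := w_central op hbij hlatin v.2
      simp only [emul, one_mul, mul_one, one_smul, rsmul_one, rsmul_eq_smul,
        qmul_smul_left, qmul_smul_right, hc, Prod.mk.injEq, true_and]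
      abel
    have hscal : -(α / (1 + (Fintype.card X : K) * α)) + α +
        α * -(α / (1 + (Fintype.card X : K) * α)) * (Fintype.card X : K) = 0 := by
      rw [div_eq_mul_inv]
      linear_combination (-α) * mul_inv_cancel₀ hα
    exact ⟨hcent, hkey _ hscal, (hcent ((1 : K), _ • wAll X K)).symm.trans (hkey _ hscal)⟩
end
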